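/- arXiv:2402.13544 — 3 statements merged into one kernel-verified Lean document; each statement's English description precedes it below -/
import Mathlib

section
/- Let M be a finitely generated Z-graded module over the polynomial ring k[z] (with deg z = 2) satisfying the hard Lefschetz property, i.e. multiplication by z^n restricts to a k-linear isomorphism M^{-n} → M^{n} for all n ≥ 0. Then for every integer n, the submodule M^{≥n} := ⊕_{k≥n} M^k equals the sum over all pairs (k,l) of natural numbers with k - l = n of Im(z_M^k) ∩ Ker(z_M^{l+1}), where z_M denotes the action of z on M. -/
open Polynomial DirectSum

/-!
For `⊇`: if `x = z^a y` and `z^(b+1) x = 0`, a homogeneous component `y_i` of `y` with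
`i + 2a < a - b` sits in degree `i = -d` with `d ≥ a + b + 1` and is killed by `z^(a+b+1)`;
hard Lefschetz makes `z^d`, hence `z^(a+b+1)`, injective on `M^(-d)`, so `y_i = 0`.

For `⊆`: the right-hand side `F n` satisfies `z F n ⊆ F (n + 2)` and hard Lefschetz gives
`M^m = z^m M^(-m)`, so it suffices to treat `M^(-d) ⊆ F n` for `n ≤ -d`. For `x ∈ M^(-d)`
write `z^(d+1) x = z^(d+2) y` with `y ∈ M^(-d-2)`; then `x - z y ∈ Ker z^(d+1) ⊆ F n`, and
`y ∈ F (n - 2)` by descending induction on the degree, which terminates because finite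
generation bounds the degrees of `M` from below.
-/

namespace DirectSum

variable {ι R M : Type*} [DecidableEq ι]

theorem coe_decompose_map_of_mapsTo {σ : Type*} [AddRightCancelSemigroup ι] [AddCommMonoid M]
    [SetLike σ M] [AddSubmonoidClass σ M] (ℳ : ι → σ) [Decomposition ℳ] (f : M →+ M) (d : ι)
    (hf : ∀ i, ∀ x ∈ ℳ i, f x ∈ ℳ (i + d)) (x : M) (i : ι) :
    (decompose ℳ (f x) (i + d) : M) = f (decompose ℳ x i) := by
  induction x using Decomposition.inductionOn ℳ with
  | zero => simp
  | @homogeneous j m =>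
    obtain rfl | hij := eq_or_ne j i
    · rw [decompose_of_mem_same ℳ (hf j m m.2), decompose_of_mem_same ℳ m.2]
    · rw [decompose_of_mem_ne ℳ (hf j m m.2) (by simpa using hij), decompose_of_mem_ne ℳ m.2 hij,
        map_zero]
  | add x y hx hy => simp [hx, hy]

theorem mem_iSup_iff_coe_decompose_eq_zero [Semiring R] [AddCommMonoid M] [Module R M]
    (ℳ : ι → Submodule R M) [Decomposition ℳ] (p : ι → Prop) (x : M) :
    x ∈ ⨆ (i) (_ : p i), ℳ i ↔ ∀ i, ¬ p i → (decompose ℳ x i : M) = 0 := by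
  classical
  constructor
  · intro hx i hi
    rw [iSup_subtype'] at hx
    induction hx using Submodule.iSup_induction' with
    | mem j y hy => exact decompose_of_mem_ne ℳ hy fun h => hi (h ▸ j.2)
    | zero => simp
    | add y z _ _ hy hz => simp [hy, hz]
  · intro hx
    rw [← sum_support_decompose ℳ x]
    refine Submodule.sum_mem _ fun i _ => ?_
    by_cases hi : p i
    · exact Submodule.mem_iSup_of_mem i (Submodule.mem_iSup_of_mem hi (decompose ℳ x i).2)
    · simp [hx i hi]

end DirectSum

/-- Multiplication by `z = X` on a `k[z]`-module `M`, as a `k[z]`-linear endomorphism. -/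
noncomputable def zMul (k M : Type*) [CommRing k] [AddCommGroup M]
    [Module (Polynomial k) M] : M →ₗ[Polynomial k] M where
  toFun m := (X : Polynomial k) • m
  map_add' := smul_add _
  map_smul' c m := by rw [RingHom.id_apply, ← mul_smul, mul_comm, mul_smul]

section

variable {k M : Type*} [CommRing k] [AddCommGroup M] [Module k[X] M]

theorem zMul_pow_apply (j : ℕ) (x : M) : (zMul k M ^ j) x = (X : k[X]) ^ j • x := by
  induction j with
  | zero => simp
  | succ j ih => rw [pow_succ', Module.End.mul_apply, ih, pow_succ', mul_smul]; rfl

variable [Module k M]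

theorem X_pow_smul_mem {F : ℤ → Submodule k M} (hF : ∀ n, ∀ x ∈ F n, (X : k[X]) • x ∈ F (n + 2))
    (j : ℕ) {n : ℤ} {x : M} (hx : x ∈ F n) : (X : k[X]) ^ j • x ∈ F (n + 2 * j) := by
  induction j with
  | zero => simpa using hx
  | succ j ih =>
    rw [pow_succ', mul_smul, Nat.cast_succ, mul_add_one, ← add_assoc]
    exact hF _ _ ih

theorem eq_zero_of_X_pow_smul_eq_zero {P : Submodule k M} {d j : ℕ}
    (hinj : Set.InjOn (fun x => (X : k[X]) ^ d • x) (P : Set M)) (hjd : j ≤ d) {y : M} (hy : y ∈ P)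
    (h : (X : k[X]) ^ j • y = 0) : y = 0 :=
  hinj hy P.zero_mem <| by
    simp only [smul_zero]
    rw [← Nat.sub_add_cancel hjd, pow_add, mul_smul, h, smul_zero]

variable {A : ℤ → Submodule k M}

theorem coe_decompose_X_pow_smul [Decomposition A]
    (hdeg : ∀ n, ∀ x ∈ A n, (X : k[X]) • x ∈ A (n + 2)) (j : ℕ) (x : M) (i : ℤ) :
    (decompose A ((X : k[X]) ^ j • x) (i + 2 * j) : M) = (X : k[X]) ^ j • (decompose A x i : M) :=
  coe_decompose_map_of_mapsTo A (DistribSMul.toAddMonoidHom M ((X : k[X]) ^ j)) _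
    (fun _ _ hx => X_pow_smul_mem hdeg j hx) x i

variable [IsScalarTower k k[X] M]

theorem Submodule.eq_top_of_X_smul_mem {P : Submodule k M} (hP : ∀ x ∈ P, (X : k[X]) • x ∈ P)
    {s : Set M} (hs : Submodule.span k[X] s = ⊤) (hsP : s ⊆ P) : P = ⊤ := by
  have smul_mem (p : k[X]) {x : M} (hx : x ∈ P) : p • x ∈ P := by
    induction p using Polynomial.induction_on with
    | C a => simpa only [← algebraMap_eq, algebraMap_smul] using P.smul_mem a hx
    | add p q hp hq => simpa only [add_smul] using P.add_mem hp hq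
    | monomial n a ih =>
      rw [pow_succ, ← mul_assoc, mul_comm, mul_smul]
      exact hP _ ih
  refine Submodule.eq_top_iff'.2 fun x => ?_
  have hx : x ∈ Submodule.span k[X] s := hs ▸ Submodule.mem_top
  induction hx using Submodule.span_induction with
  | mem y hy => exact hsP hy
  | zero => exact P.zero_mem
  | add y z _ _ hy hz => exact P.add_mem hy hz
  | smul p y _ hy => exact smul_mem p hy

variable (k M) in
noncomputable def imKerFiltration (n : ℤ) : Submodule k M :=
  ⨆ (p : ℕ × ℕ) (_ : (p.1 : ℤ) - (p.2 : ℤ) = n),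
    ((LinearMap.range ((zMul k M) ^ p.1)).restrictScalars k ⊓
      (LinearMap.ker ((zMul k M) ^ (p.2 + 1))).restrictScalars k)

theorem mem_range_inf_ker_iff {a b : ℕ} {x : M} :
    x ∈ (LinearMap.range ((zMul k M) ^ a)).restrictScalars k ⊓
      (LinearMap.ker ((zMul k M) ^ (b + 1))).restrictScalars k ↔
      (∃ y, (X : k[X]) ^ a • y = x) ∧ (X : k[X]) ^ (b + 1) • x = 0 := by
  simp [zMul_pow_apply]

theorem X_pow_smul_mem_imKerFiltration {a b : ℕ} {n : ℤ} (hab : (a : ℤ) - b = n) (y : M)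
    (hy : (X : k[X]) ^ (a + b + 1) • y = 0) : (X : k[X]) ^ a • y ∈ imKerFiltration k M n := by
  refine Submodule.mem_iSup_of_mem (a, b) (Submodule.mem_iSup_of_mem hab ?_)
  refine mem_range_inf_ker_iff.2 ⟨⟨y, rfl⟩, ?_⟩
  rwa [smul_smul, ← pow_add, add_right_comm, add_comm b]

theorem X_smul_mem_imKerFiltration (n : ℤ) (x : M) (hx : x ∈ imKerFiltration k M n) :
    (X : k[X]) • x ∈ imKerFiltration k M (n + 2) := by
  suffices imKerFiltration k M n ≤
      (imKerFiltration k M (n + 2)).comap ((zMul k M).restrictScalars k) from this hx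
  refine iSup₂_le fun ⟨a, b⟩ hab x hx => ?_
  dsimp only at hab hx
  obtain ⟨⟨y, rfl⟩, hker⟩ := mem_range_inf_ker_iff.1 hx
  change (X : k[X]) • (X : k[X]) ^ a • y ∈ imKerFiltration k M (n + 2)
  cases b with
  | zero =>
    rw [zero_add, pow_one] at hker
    rw [hker]
    exact Submodule.zero_mem _
  | succ l =>
    rw [← mul_smul, ← pow_succ']
    refine X_pow_smul_mem_imKerFiltration (b := l) (by push_cast at hab ⊢; omega) y ?_
    rwa [show a + 1 + l + 1 = l + 1 + 1 + a by omega, pow_add, mul_smul]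

theorem mem_imKerFiltration_of_X_pow_smul_eq_zero {n : ℤ} {d : ℕ} (hn : n ≤ -d) {x : M}
    (hx : (X : k[X]) ^ (d + 1) • x = 0) : x ∈ imKerFiltration k M n := by
  obtain ⟨c, hc⟩ : ∃ c, 0 + (-n).toNat + 1 = c + (d + 1) := ⟨(-n).toNat - d, by omega⟩
  simpa using X_pow_smul_mem_imKerFiltration (a := 0) (b := (-n).toNat) (by omega) x
    (by rw [hc, pow_add, mul_smul, hx, smul_zero])

theorem exists_forall_lt_eq_bot [Module.Finite k[X] M] [Decomposition A]
    (hdeg : ∀ n, ∀ x ∈ A n, (X : k[X]) • x ∈ A (n + 2)) : ∃ N : ℤ, ∀ m < N, A m = ⊥ := by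
  classical
  obtain ⟨s, hs⟩ := Module.Finite.fg_top (R := k[X]) (M := M)
  obtain ⟨N, hN⟩ :=
    (s.finite_toSet.biUnion fun g _ => (decompose A g).support.finite_toSet).bddBelow
  have hB : ⨆ (m : ℤ) (_ : N ≤ m), A m = ⊤ := by
    refine Submodule.eq_top_of_X_smul_mem (fun x hx => ?_) hs fun g hg => ?_
    · have hX : ⨆ (m : ℤ) (_ : N ≤ m), A m ≤
          (⨆ (m : ℤ) (_ : N ≤ m), A m).comap ((zMul k M).restrictScalars k) :=
        iSup₂_le fun m hm y hy =>
          Submodule.mem_iSup_of_mem (m + 2) (Submodule.mem_iSup_of_mem (by omega) (hdeg m y hy))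
      exact hX hx
    · refine (mem_iSup_iff_coe_decompose_eq_zero A _ g).2 fun m hm => ?_
      by_contra h
      exact hm (hN (Set.mem_biUnion hg (DFinsupp.mem_support_iff.2 fun h' => h (by simp [h']))))
  refine ⟨N, fun m hm => eq_bot_iff.2 fun x hx => ?_⟩
  have := (mem_iSup_iff_coe_decompose_eq_zero A _ x).1 (hB ▸ Submodule.mem_top) m (by omega)
  rwa [decompose_of_mem_same A hx] at this

theorem range_inf_ker_le_iSup_ge [Decomposition A]
    (hdeg : ∀ n, ∀ x ∈ A n, (X : k[X]) • x ∈ A (n + 2))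
    (hinj : ∀ d : ℕ, Set.InjOn (fun x => (X : k[X]) ^ d • x) (A (-(d : ℤ)) : Set M)) (a b : ℕ) :
    (LinearMap.range ((zMul k M) ^ a)).restrictScalars k ⊓
      (LinearMap.ker ((zMul k M) ^ (b + 1))).restrictScalars k ≤
      ⨆ (m : ℤ) (_ : (a : ℤ) - b ≤ m), A m := by
  intro x hx
  obtain ⟨⟨y, rfl⟩, hker⟩ := mem_range_inf_ker_iff.1 hx
  refine (mem_iSup_iff_coe_decompose_eq_zero A _ _).2 fun m hm => ?_
  obtain ⟨d, hd⟩ : ∃ d : ℕ, m = -d + 2 * a := ⟨(2 * a - m).toNat, by omega⟩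
  subst hd
  have hy : (decompose A y (-d) : M) = 0 := by
    refine eq_zero_of_X_pow_smul_eq_zero (hinj d) (j := b + 1 + a) (by omega)
      (decompose A y (-d)).2 ?_
    rw [pow_add, mul_smul, ← coe_decompose_X_pow_smul hdeg, ← coe_decompose_X_pow_smul hdeg, hker]
    simp
  rw [coe_decompose_X_pow_smul hdeg, hy, smul_zero]

theorem neg_le_imKerFiltration
    (hdeg : ∀ n, ∀ x ∈ A n, (X : k[X]) • x ∈ A (n + 2))
    (hsurj : ∀ d : ℕ, Set.SurjOn (fun x => (X : k[X]) ^ d • x) (A (-(d : ℤ)) : Set M) (A d))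
    (hbdd : ∃ N : ℤ, ∀ m < N, A m = ⊥) (d : ℕ) {n : ℤ} (hn : n ≤ -d) :
    A (-d) ≤ imKerFiltration k M n := by
  induction d using Nat.strong_decreasing_induction generalizing n with
  | base =>
    obtain ⟨N, hN⟩ := hbdd
    exact ⟨(-N).toNat, fun d hd n _ => by rw [hN _ (by omega)]; exact bot_le⟩
  | step d ih =>
    intro x hx
    have hx' : (X : k[X]) ^ (d + 1) • x ∈ A ((d + 2 : ℕ) : ℤ) := by
      convert X_pow_smul_mem hdeg (d + 1) hx using 2
      push_cast; ring
    obtain ⟨y, hy, hyx⟩ := hsurj (d + 2) hx'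
    have hker : (X : k[X]) ^ (d + 1) • (x - (X : k[X]) • y) = 0 := by
      rw [smul_sub, smul_smul, ← pow_succ]
      exact sub_eq_zero.2 hyx.symm
    have hXy := X_smul_mem_imKerFiltration _ y (ih (d + 2) (by omega) (n := n - 2) (by omega) hy)
    rw [sub_add_cancel] at hXy
    simpa using add_mem (mem_imKerFiltration_of_X_pow_smul_eq_zero hn hker) hXy

theorem le_imKerFiltration (hdeg : ∀ n, ∀ x ∈ A n, (X : k[X]) • x ∈ A (n + 2))
    (hsurj : ∀ d : ℕ, Set.SurjOn (fun x => (X : k[X]) ^ d • x) (A (-(d : ℤ)) : Set M) (A d))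
    (hbdd : ∃ N : ℤ, ∀ m < N, A m = ⊥) {m n : ℤ} (hnm : n ≤ m) : A m ≤ imKerFiltration k M n := by
  obtain ⟨d, rfl | rfl⟩ := Int.eq_nat_or_neg m
  · rintro _ hx
    obtain ⟨y, hy, rfl⟩ := hsurj d hx
    have := X_pow_smul_mem X_smul_mem_imKerFiltration d
      (neg_le_imKerFiltration hdeg hsurj hbdd d (n := n - 2 * d) (by omega) hy)
    rwa [sub_add_cancel] at this
  · exact neg_le_imKerFiltration hdeg hsurj hbdd d hnm

end

/-- Let `M` be a finitely generated `ℤ`-graded module over `k[z]`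
(with `deg z = 2`, so that `z` raises degrees by `2`) satisfying the hard Lefschetz
property.  Then for every `n : ℤ`, the submodule `M^{≥ n} = ⨆_{m ≥ n} M^m` equals the
sum over pairs `(k, l)` of natural numbers with `k - l = n` of
`Im(z^k) ∩ Ker(z^{l+1})`. -/
theorem hard_lefschetz_filtration
    (k M : Type*) [Field k] [AddCommGroup M]
    [Module (Polynomial k) M] [Module k M] [IsScalarTower k (Polynomial k) M]
    [Module.Finite (Polynomial k) M]
    (A : ℤ → Submodule k M)
    (hinternal : DirectSum.IsInternal A)
    (hdeg : ∀ (n : ℤ), ∀ x ∈ A n, (X : Polynomial k) • x ∈ A (n + 2))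
    (hHL : ∀ n : ℕ, Set.BijOn (fun x => ((X : Polynomial k) ^ n) • x)
      (A (-(n : ℤ)) : Set M) (A (n : ℤ)))
    (n : ℤ) :
    (⨆ (m : ℤ) (_ : n ≤ m), A m) =
      ⨆ (p : ℕ × ℕ) (_ : (p.1 : ℤ) - (p.2 : ℤ) = n),
        ((LinearMap.range ((zMul k M) ^ p.1)).restrictScalars k ⊓
          (LinearMap.ker ((zMul k M) ^ (p.2 + 1))).restrictScalars k) := by
  let := hinternal.chooseDecomposition
  have hbdd := exists_forall_lt_eq_bot hdeg
  refine le_antisymm (iSup₂_le fun m hm => ?_) (iSup₂_le fun p hp => ?_)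
  · exact le_imKerFiltration hdeg (fun d => (hHL d).surjOn) hbdd hm
  · exact hp ▸ range_inf_ker_le_iSup_ge hdeg (fun d => (hHL d).injOn) p.1 p.2
end

section
/- Suppose 0 → M^! → M^* → N⟨1⟩ → 0 is a short exact sequence of Z-graded k[z]-modules (deg z = 2) such that: (i) M^! and M^* are free of finite rank over k[z]; (ii) writing M̄^! = M^!/zM^! and M̄^* = M^*/zM^*, one has (M̄^!)^{-n} = 0 and (M̄^*)^{n} = 0 for all n > 0; (iii) N satisfies the hard Lefschetz property. Then the graded k[z]-module L := M^*/zM^! (where M^! is viewed as a submodule of M^* via the given injection) satisfies the hard Lefschetz property. -/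
/-! Write `Z = z·f(M¹)`. If `a` has degree `-n < 0` and `zⁿ a ∈ Z`, torsion-freeness gives
`zⁿ⁻¹ a ∈ f(M¹)`, so `zⁿ⁻¹ g(a) = 0` and hard Lefschetz for `N` forces `g(a) = 0`; then
`a = f(w)` with `w` of negative degree, hence divisible by `z`, so `a ∈ Z`. Conversely, an
element of degree `n > 0` is `z y`; hard Lefschetz writes `g(y) = zⁿ⁻¹ g(u)` with `u` of
degree `-n`, and exactness puts `y - zⁿ⁻¹ u` in `f(M¹)`, i.e. `z y ≡ zⁿ u` modulo `Z`. -/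

open Polynomial

theorem exists_homogeneous_preimage {R M M' ι ι' : Type*} [Semiring R]
    [AddCommMonoid M] [AddCommMonoid M'] [Module R M] [Module R M']
    [DecidableEq ι] [DecidableEq ι'] {A : ι → Submodule R M} {A' : ι' → Submodule R M'}
    (hA : DirectSum.IsInternal A) (hA' : DirectSum.IsInternal A')
    (φ : M →ₗ[R] M') {d : ι → ι'} (hd : Function.Injective d)
    (hφ : ∀ i, ∀ x ∈ A i, φ x ∈ A' (d i)) {i : ι} {x : M'} (hx : x ∈ A' (d i))
    (hxφ : x ∈ LinearMap.range φ) : ∃ y ∈ A i, φ y = x := by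
  let _ := hA.chooseDecomposition
  let _ := hA'.chooseDecomposition
  have hcomm : ∀ y, φ (DirectSum.decompose A y i) = DirectSum.decompose A' (φ y) (d i) := by
    intro y
    induction y using DirectSum.Decomposition.inductionOn A with
    | zero => simp
    | @homogeneous j y =>
      rcases eq_or_ne j i with rfl | hji
      · rw [DirectSum.decompose_of_mem_same _ y.2,
          DirectSum.decompose_of_mem_same _ (hφ j y y.2)]
      · rw [DirectSum.decompose_of_mem_ne _ y.2 hji,
          DirectSum.decompose_of_mem_ne _ (hφ j y y.2) (hd.ne hji), map_zero]
    | add y y' hy hy' => simp [hy, hy']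
  obtain ⟨y, rfl⟩ := hxφ
  exact ⟨_, (DirectSum.decompose A y i).2, by rw [hcomm, DirectSum.decompose_of_mem_same _ hx]⟩

theorem pow_smul_mem_of_smul_mem {R M σ : Type*} [Monoid R] [MulAction R M] [SetLike σ M]
    {A : ℤ → σ} {r : R} {d : ℤ} (hA : ∀ n, ∀ x ∈ A n, r • x ∈ A (n + d)) (j : ℕ) :
    ∀ {n : ℤ} {x : M}, x ∈ A n → r ^ j • x ∈ A (n + j * d) := by
  induction j with
  | zero => simp
  | succ j ih =>
    intro n x hx
    rw [pow_succ, mul_smul]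
    convert ih (hA n x hx) using 2
    push_cast; ring

theorem Submodule.bijOn_smul_image_mkQ {R M : Type*} [CommRing R] [AddCommGroup M]
    [Module R M] (Z : Submodule R M) (r : R) {S S' : Set M}
    (hmaps : Set.MapsTo (r • ·) S S') (hinj : ∀ a ∈ S, ∀ b ∈ S, r • (a - b) ∈ Z → a - b ∈ Z)
    (hsurj : ∀ a ∈ S', ∃ u ∈ S, r • u - a ∈ Z) :
    Set.BijOn (fun x : M ⧸ Z => r • x) (Z.mkQ '' S) (Z.mkQ '' S') := by
  refine ⟨?_, ?_, ?_⟩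
  · rintro _ ⟨a, ha, rfl⟩
    exact ⟨r • a, hmaps ha, map_smul Z.mkQ r a⟩
  · rintro _ ⟨a, ha, rfl⟩ _ ⟨b, hb, rfl⟩ hab
    simp only [mkQ_apply, ← Quotient.mk_smul, Quotient.eq, ← smul_sub] at hab ⊢
    exact hinj a ha b hb hab
  · rintro _ ⟨a, ha, rfl⟩
    obtain ⟨u, hu, hua⟩ := hsurj a ha
    refine ⟨Z.mkQ u, ⟨u, hu, rfl⟩, ?_⟩
    simpa only [mkQ_apply, ← Quotient.mk_smul, Quotient.eq] using hua

@[simp]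
theorem zMul_apply (k M : Type*) [CommRing k] [AddCommGroup M] [Module k[X] M] (m : M) :
    zMul k M m = (X : k[X]) • m :=
  rfl

section ShortExactSequence

variable {k M₁ M₂ N : Type*} [CommRing k] [AddCommGroup M₁] [AddCommGroup M₂] [AddCommGroup N]
  [Module k[X] M₁] [Module k[X] M₂] [Module k[X] N] [Module k M₂] [Module k N]
  [IsScalarTower k k[X] M₂] {A₂ : ℤ → Submodule k M₂} {B : ℤ → Submodule k N}
  {f : M₁ →ₗ[k[X]] M₂} {g : M₂ →ₗ[k[X]] N}

theorem mem_map_zMul_range_of_pow_succ_smul_mem [IsDomain k] [Module k M₁]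
    [IsScalarTower k k[X] M₁] [Module.IsTorsionFree k[X] M₂] {A₁ : ℤ → Submodule k M₁}
    (hint₁ : DirectSum.IsInternal A₁) (hint₂ : DirectSum.IsInternal A₂)
    (hfgr : ∀ n, ∀ x ∈ A₁ n, f x ∈ A₂ n) (hggr : ∀ n, ∀ x ∈ A₂ n, g x ∈ B (n + 1))
    (hexact : LinearMap.range f = LinearMap.ker g)
    (hvan₁ : ∀ n : ℤ, 0 < n → ∀ x ∈ A₁ (-n), ∃ y : M₁, x = (X : k[X]) • y) {m : ℕ}
    (hHL : Set.InjOn (fun x => (X : k[X]) ^ m • x) (B (-m) : Set N)) {a : M₂}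
    (ha : a ∈ A₂ (-(m + 1)))
    (h : (X : k[X]) ^ (m + 1) • a ∈ (LinearMap.range f).map (zMul k M₂)) :
    a ∈ (LinearMap.range f).map (zMul k M₂) := by
  obtain ⟨_, ⟨v, rfl⟩, hv⟩ := h
  have hfv : f v = (X : k[X]) ^ m • a :=
    smul_right_injective M₂ X_ne_zero <| show (X : k[X]) • f v = X • (X ^ m • a) by
      rwa [smul_smul, ← pow_succ']
  have hga : g a = 0 := by
    refine hHL (by simpa using hggr _ a ha) (zero_mem _) ?_
    simp only [smul_zero, ← map_smul, ← hfv]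
    exact hexact.le ⟨v, rfl⟩
  obtain ⟨w, hw, rfl⟩ := exists_homogeneous_preimage hint₁ hint₂ (f.restrictScalars k) (d := id)
    Function.injective_id hfgr ha (hexact.ge hga)
  obtain ⟨y, rfl⟩ := hvan₁ (m + 1) (by positivity) w hw
  exact ⟨f y, LinearMap.mem_range_self f y, by simp⟩

theorem exists_pow_succ_smul_sub_mem_map_zMul_range [IsScalarTower k k[X] N]
    (hint₂ : DirectSum.IsInternal A₂) (hintB : DirectSum.IsInternal B)
    (hdeg₂ : ∀ n, ∀ x ∈ A₂ n, (X : k[X]) • x ∈ A₂ (n + 2))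
    (hggr : ∀ n, ∀ x ∈ A₂ n, g x ∈ B (n + 1)) (hgsurj : Function.Surjective g)
    (hexact : LinearMap.range f = LinearMap.ker g)
    (hvan₂ : ∀ n : ℤ, 0 < n → ∀ x ∈ A₂ n, ∃ y : M₂, x = (X : k[X]) • y) {m : ℕ}
    (hHL : Set.SurjOn (fun x => (X : k[X]) ^ m • x) (B (-m) : Set N) (B m)) {a : M₂}
    (ha : a ∈ A₂ (m + 1)) :
    ∃ u ∈ A₂ (-(m + 1)), (X : k[X]) ^ (m + 1) • u - a ∈ (LinearMap.range f).map (zMul k M₂) := by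
  obtain ⟨y₀, hy₀⟩ := hvan₂ (m + 1) (by positivity) a ha
  obtain ⟨y, hy, rfl⟩ := exists_homogeneous_preimage hint₂ hint₂
    ((zMul k M₂).restrictScalars k) (d := (· + 2)) (add_left_injective 2) hdeg₂ (i := m - 1)
    (by convert ha using 2; ring) ⟨y₀, hy₀.symm⟩
  obtain ⟨b, hb, hby⟩ := hHL (show g y ∈ B m by simpa using hggr _ y hy)
  obtain ⟨u, hu, rfl⟩ := exists_homogeneous_preimage hint₂ hintB (g.restrictScalars k)
    (d := (· + 1)) (add_left_injective 1) hggr (i := -(m + 1)) (by simpa using hb) (hgsurj b)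
  obtain ⟨v, hv⟩ : y - (X : k[X]) ^ m • u ∈ LinearMap.range f := by
    rw [hexact, LinearMap.mem_ker, map_sub, map_smul]
    exact sub_eq_zero.mpr hby.symm
  refine ⟨u, hu, f (-v), LinearMap.mem_range_self f _, ?_⟩
  simp [hv, smul_sub, pow_succ', mul_smul]

end ShortExactSequence

theorem ses_hard_lefschetz_general
    (k M₁ M₂ N : Type*) [Field k]
    [AddCommGroup M₁] [AddCommGroup M₂] [AddCommGroup N]
    [Module (Polynomial k) M₁] [Module (Polynomial k) M₂] [Module (Polynomial k) N]
    [Module k M₁] [Module k M₂] [Module k N]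
    [IsScalarTower k (Polynomial k) M₁] [IsScalarTower k (Polynomial k) M₂]
    [IsScalarTower k (Polynomial k) N]
    (A₁ : ℤ → Submodule k M₁) (A₂ : ℤ → Submodule k M₂) (B : ℤ → Submodule k N)
    (hint₁ : DirectSum.IsInternal A₁) (hint₂ : DirectSum.IsInternal A₂)
    (hintB : DirectSum.IsInternal B)
    (hdeg₂ : ∀ (n : ℤ), ∀ x ∈ A₂ n, (X : Polynomial k) • x ∈ A₂ (n + 2))
    (f : M₁ →ₗ[Polynomial k] M₂) (g : M₂ →ₗ[Polynomial k] N)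
    (hfgr : ∀ (n : ℤ), ∀ x ∈ A₁ n, f x ∈ A₂ n)
    -- `g : M² → N⟨1⟩` is graded of degree `0`, i.e. it shifts degrees by `1` in `N`
    (hggr : ∀ (n : ℤ), ∀ x ∈ A₂ n, g x ∈ B (n + 1))
    (hgsurj : Function.Surjective g)
    (hexact : LinearMap.range f = LinearMap.ker g)
    -- (i) freeness and finiteness
    [Module.Free (Polynomial k) M₂]
    -- (ii) vanishing of graded pieces of the reductions mod `z`
    (hvan₁ : ∀ n : ℤ, 0 < n → ∀ x ∈ A₁ (-n), ∃ y : M₁, x = (X : Polynomial k) • y)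
    (hvan₂ : ∀ n : ℤ, 0 < n → ∀ x ∈ A₂ n, ∃ y : M₂, x = (X : Polynomial k) • y)
    -- (iii) hard Lefschetz for `N`
    (hHLN : ∀ n : ℕ, Set.BijOn (fun x => ((X : Polynomial k) ^ n) • x)
      (B (-(n : ℤ)) : Set N) (B (n : ℤ))) :
    -- conclusion: `L = M² / z·f(M¹)` satisfies the hard Lefschetz property
    ∀ n : ℕ, Set.BijOn
      (fun x : M₂ ⧸ Submodule.map (zMul k M₂) (LinearMap.range f) =>
        ((X : Polynomial k) ^ n) • x)
      ((Submodule.map (zMul k M₂) (LinearMap.range f)).mkQ '' (A₂ (-(n : ℤ)) : Set M₂))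
      ((Submodule.map (zMul k M₂) (LinearMap.range f)).mkQ '' (A₂ (n : ℤ) : Set M₂)) := by
  rintro (_ | m)
  · simp only [pow_zero, one_smul]
    exact Set.bijOn_id _
  push_cast
  refine Submodule.bijOn_smul_image_mkQ _ _ (fun a ha => ?_) (fun a ha b hb hab => ?_)
    (fun a ha => ?_)
  · have := pow_smul_mem_of_smul_mem hdeg₂ (m + 1) ha
    rwa [show -((m : ℤ) + 1) + ((m + 1 : ℕ) : ℤ) * 2 = m + 1 by push_cast; ring] at this
  · exact mem_map_zMul_range_of_pow_succ_smul_mem hint₁ hint₂ hfgr hggr hexact hvan₁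
      (hHLN m).injOn (sub_mem ha hb) hab
  · exact exists_pow_succ_smul_sub_mem_map_zMul_range hint₂ hintB hdeg₂ hggr hgsurj hexact hvan₂
      (hHLN m).surjOn ha

/-- Given a short exact sequence `0 → M¹ → M² → N⟨1⟩ → 0` of
`ℤ`-graded `k[z]`-modules (`deg z = 2`) such that (i) `M¹` and `M²` are free of finite
rank over `k[z]`, (ii) `(M̄¹)^{-n} = 0` and `(M̄²)^{n} = 0` for all `n > 0` (where
`M̄ = M/zM`), and (iii) `N` satisfies the hard Lefschetz property, the graded module
`L := M²/zM¹` (with `M¹` viewed as a submodule of `M²` via the injection `f`) satisfies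
the hard Lefschetz property.  The grading of `L` in degree `n` is the image of `(M²)^n`
under the quotient map. -/
theorem ses_hard_lefschetz
    (k M₁ M₂ N : Type*) [Field k]
    [AddCommGroup M₁] [AddCommGroup M₂] [AddCommGroup N]
    [Module (Polynomial k) M₁] [Module (Polynomial k) M₂] [Module (Polynomial k) N]
    [Module k M₁] [Module k M₂] [Module k N]
    [IsScalarTower k (Polynomial k) M₁] [IsScalarTower k (Polynomial k) M₂]
    [IsScalarTower k (Polynomial k) N]
    (A₁ : ℤ → Submodule k M₁) (A₂ : ℤ → Submodule k M₂) (B : ℤ → Submodule k N)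
    (hint₁ : DirectSum.IsInternal A₁) (hint₂ : DirectSum.IsInternal A₂)
    (hintB : DirectSum.IsInternal B)
    (hdeg₁ : ∀ (n : ℤ), ∀ x ∈ A₁ n, (X : Polynomial k) • x ∈ A₁ (n + 2))
    (hdeg₂ : ∀ (n : ℤ), ∀ x ∈ A₂ n, (X : Polynomial k) • x ∈ A₂ (n + 2))
    (hdegB : ∀ (n : ℤ), ∀ x ∈ B n, (X : Polynomial k) • x ∈ B (n + 2))
    (f : M₁ →ₗ[Polynomial k] M₂) (g : M₂ →ₗ[Polynomial k] N)
    (hfgr : ∀ (n : ℤ), ∀ x ∈ A₁ n, f x ∈ A₂ n)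
    -- `g : M² → N⟨1⟩` is graded of degree `0`, i.e. it shifts degrees by `1` in `N`
    (hggr : ∀ (n : ℤ), ∀ x ∈ A₂ n, g x ∈ B (n + 1))
    (hfinj : Function.Injective f) (hgsurj : Function.Surjective g)
    (hexact : LinearMap.range f = LinearMap.ker g)
    -- (i) freeness and finiteness
    [Module.Free (Polynomial k) M₁] [Module.Finite (Polynomial k) M₁]
    [Module.Free (Polynomial k) M₂] [Module.Finite (Polynomial k) M₂]
    -- (ii) vanishing of graded pieces of the reductions mod `z`
    (hvan₁ : ∀ n : ℤ, 0 < n → ∀ x ∈ A₁ (-n), ∃ y : M₁, x = (X : Polynomial k) • y)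
    (hvan₂ : ∀ n : ℤ, 0 < n → ∀ x ∈ A₂ n, ∃ y : M₂, x = (X : Polynomial k) • y)
    -- (iii) hard Lefschetz for `N`
    (hHLN : ∀ n : ℕ, Set.BijOn (fun x => ((X : Polynomial k) ^ n) • x)
      (B (-(n : ℤ)) : Set N) (B (n : ℤ))) :
    -- conclusion: `L = M² / z·f(M¹)` satisfies the hard Lefschetz property
    ∀ n : ℕ, Set.BijOn
      (fun x : M₂ ⧸ Submodule.map (zMul k M₂) (LinearMap.range f) =>
        ((X : Polynomial k) ^ n) • x)
      ((Submodule.map (zMul k M₂) (LinearMap.range f)).mkQ '' (A₂ (-(n : ℤ)) : Set M₂))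
      ((Submodule.map (zMul k M₂) (LinearMap.range f)).mkQ '' (A₂ (n : ℤ) : Set M₂)) :=
  ses_hard_lefschetz_general k M₁ M₂ N A₁ A₂ B hint₁ hint₂ hintB hdeg₂ f g hfgr hggr hgsurj hexact
    hvan₁ hvan₂ hHLN
end

section
/- Let H_β be the symmetric quiver Hecke algebra and M, N simple modules over the completion Ĥ with at least one of them real (i.e. M⋆M or N⋆N simple). For a(z) ≠ b(z) in zO (O = k[[z]]), the endomorphism ring of the deformed convolution product satisfies End_{Ĥ_O}(M_{a(z)} ⋆_O N_{b(z)}) = O·id, where M_{a(z)} is the affinization of M with x_k acting as x_k ⊗ 1 + 1 ⊗ a(z). -/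
/-!
Reducing modulo `z` turns a `B`-endomorphism `f` of `T` into an endomorphism of `T/zT`, which is a
scalar `c₀ : k`; since `z` is a non-zero-divisor on `T`, `f - c₀` is `z` times a `B`-endomorphism
`f₁`. Repeating the argument with `f₁, f₂, …` gives `f ≡ ∑_{i<n} cᵢ zⁱ (mod zⁿ T)` for every `n`,
so `f` is multiplication by `∑ cᵢ zⁱ` because `T` is `z`-adically separated.
-/

open PowerSeries

theorem LinearMap.exists_eq_smul_of_forall_exists_eq_smul {R B M T : Type*} [CommRing R]
    [Ring B] [Algebra R B] [AddCommGroup M] [Module B M] [AddCommGroup T] [Module B T]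
    [Module R T] [IsScalarTower R B T] {a : R} (ha : Function.Injective (a • · : T → T))
    (φ : M →ₗ[B] T) (hφ : ∀ x, ∃ y, φ x = a • y) : ∃ ψ : M →ₗ[B] T, ∀ x, φ x = a • ψ x := by
  let μ : T →ₗ[B] T := DistribSMul.toLinearMap B T a
  have hle : LinearMap.range φ ≤ LinearMap.range μ := by
    rintro _ ⟨x, rfl⟩
    obtain ⟨y, hy⟩ := hφ x
    exact ⟨y, hy.symm⟩
  refine ⟨(LinearEquiv.ofInjective μ ha).symm.toLinearMap ∘ₗ
    Submodule.inclusion hle ∘ₗ φ.rangeRestrict, fun x => ?_⟩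
  exact (LinearEquiv.ofInjective_symm_apply (f := μ) (h := ha)
    ⟨φ x, hle (LinearMap.mem_range_self φ x)⟩).symm

theorem PowerSeries.X_pow_dvd_sub_trunc {R : Type*} [CommRing R] (φ : R⟦X⟧) (n : ℕ) :
    X ^ n ∣ φ - (trunc n φ : R⟦X⟧) := by
  rw [X_pow_dvd_iff]
  intro m hm
  simp [Polynomial.coeff_coe, coeff_trunc, hm]

section XAdic

variable {R T : Type*} [CommRing R] [AddCommGroup T] [Module R⟦X⟧ T]

theorem eq_trunc_smul_add_X_pow_smul {c : ℕ → R} {g : ℕ → T → T}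
    (hg : ∀ n x, g n x = C (c n) • x + (X : R⟦X⟧) • g (n + 1) x) (n : ℕ) (x : T) :
    g 0 x = (trunc n (mk c) : R⟦X⟧) • x + (X : R⟦X⟧) ^ n • g n x := by
  induction n with
  | zero => simp
  | succ n ih =>
    rw [ih, hg n, trunc_succ, coeff_mk, ← Polynomial.C_mul_X_pow_eq_monomial]
    push_cast
    rw [smul_add, smul_smul, smul_smul, ← pow_succ, add_smul, add_assoc, mul_comm]

theorem eq_mk_smul_of_separated {c : ℕ → R} {g : ℕ → T → T}
    (hsep : ∀ x : T, (∀ n : ℕ, ∃ y : T, x = (X : R⟦X⟧) ^ n • y) → x = 0)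
    (hg : ∀ n x, g n x = C (c n) • x + (X : R⟦X⟧) • g (n + 1) x) (x : T) :
    g 0 x = mk c • x := by
  rw [← sub_eq_zero]
  refine hsep _ fun n => ?_
  obtain ⟨e, he⟩ := X_pow_dvd_sub_trunc (mk c) n
  refine ⟨g n x - e • x, ?_⟩
  rw [eq_trunc_smul_add_X_pow_smul hg n x, smul_sub, smul_smul, ← he, sub_smul]
  abel

end XAdic

theorem exists_eq_C_smul_add_X_smul {R B T : Type*} [CommRing R] [Ring B] [Algebra R⟦X⟧ B]
    [AddCommGroup T] [Module B T] [Module R⟦X⟧ T] [IsScalarTower R⟦X⟧ B T]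
    (hX : Function.Injective ((X : R⟦X⟧) • · : T → T)) (ST : Submodule B T)
    (hST : ∀ x : T, x ∈ ST ↔ ∃ y : T, x = (X : R⟦X⟧) • y)
    (hEnd0 : ∀ g : (T ⧸ ST) →ₗ[B] (T ⧸ ST), ∃ c : R,
      ∀ x : T, g (Submodule.Quotient.mk x) = Submodule.Quotient.mk (C c • x))
    (g : T →ₗ[B] T) : ∃ c : R, ∃ h : T →ₗ[B] T, ∀ x, g x = C c • x + (X : R⟦X⟧) • h x := by
  have hmaps : ST ≤ ST.comap g := fun x hx => by
    obtain ⟨y, rfl⟩ := (hST x).mp hx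
    exact (hST _).mpr ⟨g y, g.map_smul_of_tower _ _⟩
  obtain ⟨c, hc⟩ := hEnd0 (ST.mapQ ST g hmaps)
  have hdiv : ∀ x, ∃ y, (g - C c • LinearMap.id : T →ₗ[B] T) x = (X : R⟦X⟧) • y := fun x =>
    (hST _).mp <| (Submodule.Quotient.eq ST).mp <| hc x
  obtain ⟨h, hh⟩ := LinearMap.exists_eq_smul_of_forall_exists_eq_smul hX _ hdiv
  exact ⟨c, h, fun x => sub_eq_iff_eq_add'.mp (hh x)⟩

/-- `B` models `Ĥ_O = Ĥ ⊗ O`, `T` the deformed product `M_{a(z)} ⋆_O N_{b(z)}` and `ST` the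
submodule `zT` (with `z = X`); `hEnd0` encodes `End(T/zT) = End(M ⋆ N) = k·id`, which is where
simplicity, reality and `a(z) ≠ b(z)` enter. -/
theorem deformed_convolution_End_eq_O_general
    (k : Type) [Field k]
    (B : Type) [Ring B] [Algebra (PowerSeries k) B]
    (T : Type) [AddCommGroup T] [Module B T]
    [Module (PowerSeries k) T] [IsScalarTower (PowerSeries k) B T]
    [Module.Free (PowerSeries k) T]
    (ST : Submodule B T)
    (hST : ∀ x : T, x ∈ ST ↔ ∃ y : T, x = (PowerSeries.X : PowerSeries k) • y)
    (hsep : ∀ x : T,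
      (∀ n : ℕ, ∃ y : T, x = ((PowerSeries.X : PowerSeries k) ^ n) • y) → x = 0)
    (hEnd0 : ∀ g : (T ⧸ ST) →ₗ[B] (T ⧸ ST), ∃ c : k,
      ∀ x : T, g (Submodule.Quotient.mk x)
        = Submodule.Quotient.mk ((PowerSeries.C c) • x)) :
    ∀ f : T →ₗ[B] T, ∃ c : PowerSeries k, ∀ x : T, f x = c • x := by
  intro f
  choose c h hch using exists_eq_C_smul_add_X_smul (smul_right_injective T X_ne_zero) ST hST hEnd0
  let g : ℕ → T →ₗ[B] T := fun n => h^[n] f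
  have hg : ∀ n x, g n x = C (c (g n)) • x + (X : k⟦X⟧) • g (n + 1) x := fun n x => by
    simp only [g, Function.iterate_succ_apply']
    exact hch _ x
  exact ⟨mk fun n => c (g n), eq_mk_smul_of_separated (g := fun n => g n) hsep hg⟩

/-- Let `H_β` be the symmetric quiver Hecke algebra (over a field
`k` of characteristic `0`) and `M, N` simple modules over the completion `Ĥ`, at least
one of them real, and `a(z) ≠ b(z) ∈ zO` with `O = k[[z]]`.  Then the endomorphism
ring of the deformed convolution product `T = M_{a(z)} ⋆_O N_{b(z)}` satisfies
`End_{Ĥ_O}(T) = O·id`.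

Encoding: `B` plays the role of `Ĥ_O = Ĥ ⊗ O` (an algebra over `O = k[[z]]`, so that
`O` is central in `B`), and `T` the deformed convolution product, an `O`-free,
`O`-finite `B`-module which is `z`-adically separated (`∩_n z^n T = 0`, hypothesis
`hsep`); the submodule `ST = zT` is the image of multiplication by `z`; the hypothesis
`hEnd0` records that `End_{Ĥ}(T/zT) = End_{Ĥ}(M ⋆ N) = k·id`, which holds because `M`
and `N` are simple with one of them real and `a(z) ≠ b(z)`.  The conclusion is that
every `B`-linear endomorphism of `T` is multiplication by a power series. -/
theorem deformed_convolution_End_eq_O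
    (k : Type) [Field k] [CharZero k]
    (B : Type) [Ring B] [Algebra (PowerSeries k) B]
    (T : Type) [AddCommGroup T] [Module B T]
    [Module (PowerSeries k) T] [IsScalarTower (PowerSeries k) B T]
    [Module.Free (PowerSeries k) T] [Module.Finite (PowerSeries k) T]
    (ST : Submodule B T)
    (hST : ∀ x : T, x ∈ ST ↔ ∃ y : T, x = (PowerSeries.X : PowerSeries k) • y)
    (hsep : ∀ x : T,
      (∀ n : ℕ, ∃ y : T, x = ((PowerSeries.X : PowerSeries k) ^ n) • y) → x = 0)
    (hEnd0 : ∀ g : (T ⧸ ST) →ₗ[B] (T ⧸ ST), ∃ c : k,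
      ∀ x : T, g (Submodule.Quotient.mk x)
        = Submodule.Quotient.mk ((PowerSeries.C c) • x)) :
    ∀ f : T →ₗ[B] T, ∃ c : PowerSeries k, ∀ x : T, f x = c • x :=
  deformed_convolution_End_eq_O_general k B T ST hST hsep hEnd0
end
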